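/- Let G be a finite simple graph whose vertex set V is partitioned into three sets A1, A2, A3, each of which is a clique of G (that is, G is the complement of a 3-partite graph). Then G has a triangle partition if and only if there exists a set S ⊆ V with |S| ≤ 42 such that the subgraph of G induced on S has a triangle partition and |Ai ∖ S| ≡ 0 (mod 3) for each i ∈ {1, 2, 3}. -/

import Mathlib

def IsTriangle {V : Type*} (G : SimpleGraph V) (T : Finset V) : Prop :=
  T.card = 3 ∧ (T : Set V).Pairwise G.Adj

def IsTrianglePacking {V : Type*} (G : SimpleGraph V) (P : Finset (Finset V)) : Prop :=
  (∀ T ∈ P, IsTriangle G T) ∧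
    (P : Set (Finset V)).Pairwise fun S T => Disjoint S T

def IsTrianglePartition {V : Type*} (G : SimpleGraph V) (P : Finset (Finset V)) : Prop :=
  IsTrianglePacking G P ∧ ∀ v, ∃ T ∈ P, v ∈ T

/-!
Write `c v` for the index of the clique containing `v`, and give each triangle `T` its colour
profile: the vector of the numbers `|T ∩ A i|` reduced mod 3. Given a triangle partition `P`,
discard the triangles of profile zero and, repeatedly, three triangles of equal profile. This
leaves a subfamily `Q` with the same total profile in which each of the 7 nonzero profiles of a
triangle occurs at most twice, so `S = ⋃ Q` has at most `3 · 14 = 42` vertices, and `|A i ∖ S|`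
is congruent to the `i`-th entry of the total profile of `P ∖ Q`, which vanishes. Conversely,
`A i ∖ S` is a clique of size divisible by 3, so it splits into triangles, which together with a
triangle partition of `S` partition `G`.
-/

open Finset

theorem exists_eq_iff_mem_of_pairwise_disjoint {α ι : Type*} {A : ι → Set α}
    (hA : Pairwise fun i j => Disjoint (A i) (A j)) (hcover : ∀ a, ∃ i, a ∈ A i) :
    ∃ c : α → ι, ∀ a i, c a = i ↔ a ∈ A i := by
  choose c hc using hcover
  refine ⟨c, fun a i => ⟨fun h => h ▸ hc a, fun ha => ?_⟩⟩
  by_contra hne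
  exact Set.disjoint_left.mp (hA hne) (hc a) ha

theorem Finset.sup_id_sdiff_sup_id {α : Type*} [DecidableEq α] {P Q : Finset (Finset α)}
    (hP : (P : Set (Finset α)).PairwiseDisjoint id) (hQP : Q ⊆ P) :
    P.sup id \ Q.sup id = (P \ Q).sup id := by
  ext v
  simp only [mem_sdiff, mem_sup, id, not_exists, not_and]
  constructor
  · rintro ⟨⟨T, hT, hvT⟩, hvQ⟩
    exact ⟨T, ⟨hT, fun hTQ => hvQ T hTQ hvT⟩, hvT⟩
  · rintro ⟨T, ⟨hT, hTQ⟩, hvT⟩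
    refine ⟨⟨T, hT, hvT⟩, fun T' hT' hvT' => ?_⟩
    have hne : T ≠ T' := fun h => hTQ (h ▸ hT')
    exact disjoint_left.mp (hP hT (hQP hT') hne) hvT hvT'

theorem Finset.card_filter_sup_id {α : Type*} [DecidableEq α] {P : Finset (Finset α)}
    (hP : (P : Set (Finset α)).PairwiseDisjoint id) (p : α → Prop) [DecidablePred p] :
    #{v ∈ P.sup id | p v} = ∑ T ∈ P, #{v ∈ T | p v} := by
  rw [sup_eq_biUnion, filter_biUnion, card_biUnion]
  · rfl
  · exact fun S hS T hT hST => (hP hS hT hST).mono (filter_subset p S) (filter_subset p T)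

theorem Finset.exists_subset_sum_eq_of_three_nsmul_eq_zero {α M : Type*} [DecidableEq α]
    [AddCommGroup M] [DecidableEq M] (hM : ∀ x : M, 3 • x = 0) (g : α → M) (P : Finset α) :
    ∃ Q ⊆ P, (∀ a ∈ Q, g a ≠ 0) ∧ (∀ m, #{a ∈ Q | g a = m} ≤ 2) ∧
      ∑ a ∈ Q, g a = ∑ a ∈ P, g a := by
  induction P using Finset.strongInduction with
  | H P ih =>
  by_cases h0 : ∃ a ∈ P, g a = 0
  · obtain ⟨a, ha, hga⟩ := h0
    obtain ⟨Q, hQP, hQ0, hQ2, hQsum⟩ := ih _ (erase_ssubset ha)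
    exact ⟨Q, hQP.trans (erase_subset a P), hQ0, hQ2, by rw [hQsum, sum_erase _ hga]⟩
  by_cases h3 : ∃ m, 3 ≤ #{a ∈ P | g a = m}
  · obtain ⟨m, hm⟩ := h3
    obtain ⟨R, hR, hRcard⟩ := exists_subset_card_eq hm
    have hRP : R ⊆ P := hR.trans (filter_subset _ _)
    obtain ⟨Q, hQP, hQ0, hQ2, hQsum⟩ :=
      ih _ (sdiff_ssubset hRP (card_pos.mp (by omega)))
    have hRsum : ∑ a ∈ R, g a = 0 := by
      rw [sum_congr rfl fun a ha => (mem_filter.mp (hR ha)).2, sum_const, hRcard, hM]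
    exact ⟨Q, hQP.trans sdiff_subset, hQ0, hQ2, by rw [hQsum, sum_sdiff_eq_sub hRP, hRsum, sub_zero]⟩
  push Not at h0 h3
  exact ⟨P, subset_rfl, h0, fun m => by have := h3 m; omega, rfl⟩

theorem IsTrianglePacking.mono {V : Type*} {G : SimpleGraph V} {P Q : Finset (Finset V)}
    (hP : IsTrianglePacking G P) (hQP : Q ⊆ P) : IsTrianglePacking G Q :=
  ⟨fun T hT => hP.1 T (hQP hT), hP.2.mono (coe_subset.mpr hQP)⟩

section ColorProfile

variable {V : Type*}

def colorProfile {ι : Type*} [DecidableEq ι] (c : V → ι) (T : Finset V) : ι → ZMod 3 :=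
  fun i => #{v ∈ T | c v = i}

/-- `(1,1,1)` and the six permutations of `(2,1,0)`: the nonzero profiles of a 3-set. -/
def triangleProfiles : Finset (Fin 3 → ZMod 3) :=
  {x | x ≠ 0 ∧ x ≠ 2 ∧ ∑ i, x i = 0}

theorem card_triangleProfiles : #triangleProfiles = 7 := by
  decide

theorem colorProfile_mem_triangleProfiles (c : V → Fin 3) {T : Finset V} (hT : #T = 3)
    (h0 : colorProfile c T ≠ 0) : colorProfile c T ∈ triangleProfiles := by
  have hsum : ∑ i, #{v ∈ T | c v = i} = 3 := by
    rw [← card_eq_sum_card_fiberwise fun v _ => mem_univ (c v), hT]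
  refine mem_filter.mpr ⟨mem_univ _, h0, fun h2 => ?_, ?_⟩
  · have hge : ∀ i, 2 ≤ #{v ∈ T | c v = i} := fun i => by
      have h2i : colorProfile c T i = 2 := congrFun h2 i
      have := congrArg ZMod.val h2i
      rw [colorProfile, ZMod.val_natCast] at this
      have : (2 : ZMod 3).val = 2 := rfl
      omega
    rw [Fin.sum_univ_three] at hsum
    have := hge 0; have := hge 1; have := hge 2
    omega
  · simp only [colorProfile]
    rw [← Nat.cast_sum, hsum]
    rfl

end ColorProfile

section TrianglePartitionOn

variable {V : Type*} [DecidableEq V] {G : SimpleGraph V}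

def IsTrianglePartitionOn (G : SimpleGraph V) (P : Finset (Finset V)) (C : Finset V) : Prop :=
  IsTrianglePacking G P ∧ P.sup id = C

theorem isTrianglePartition_iff_isTrianglePartitionOn_univ [Fintype V] {P : Finset (Finset V)} :
    IsTrianglePartition G P ↔ IsTrianglePartitionOn G P univ := by
  simp [IsTrianglePartition, IsTrianglePartitionOn, eq_univ_iff_forall, mem_sup]

theorem IsTrianglePartitionOn.subset {P : Finset (Finset V)} {C T : Finset V}
    (hP : IsTrianglePartitionOn G P C) (hT : T ∈ P) : T ⊆ C :=
  hP.2 ▸ le_sup (f := id) hT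

theorem IsTrianglePartitionOn.union {P Q : Finset (Finset V)} {C D : Finset V}
    (hP : IsTrianglePartitionOn G P C) (hQ : IsTrianglePartitionOn G Q D) (hCD : Disjoint C D) :
    IsTrianglePartitionOn G (P ∪ Q) (C ∪ D) := by
  refine ⟨⟨fun T hT => ?_, ?_⟩, by rw [sup_union, hP.2, hQ.2]; rfl⟩
  · rcases mem_union.mp hT with hT | hT
    exacts [hP.1.1 T hT, hQ.1.1 T hT]
  · rw [coe_union, Set.pairwise_union]
    refine ⟨hP.1.2, hQ.1.2, fun S hS T hT _ => ?_⟩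
    have hST := hCD.mono (hP.subset hS) (hQ.subset hT)
    exact ⟨hST, hST.symm⟩

theorem IsTrianglePartitionOn.sup {ι : Type*} [DecidableEq ι] {s : Finset ι}
    {P : ι → Finset (Finset V)} {C : ι → Finset V}
    (hP : ∀ i ∈ s, IsTrianglePartitionOn G (P i) (C i)) (hC : (s : Set ι).PairwiseDisjoint C) :
    IsTrianglePartitionOn G (s.sup P) (s.sup C) := by
  induction s using Finset.induction_on with
  | empty => exact ⟨⟨by simp, by simp⟩, rfl⟩
  | insert i s hi ih =>
    rw [coe_insert, Set.pairwiseDisjoint_insert] at hC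
    rw [sup_insert, sup_insert]
    exact (hP i (mem_insert_self i s)).union (ih (fun j hj => hP j (mem_insert_of_mem hj)) hC.1)
      (Finset.disjoint_sup_right.mpr fun j hj => hC.2 j hj (ne_of_mem_of_not_mem hj hi).symm)

theorem exists_isTrianglePartition_induce_iff (S : Finset V) :
    (∃ P, IsTrianglePartition (G.induce (S : Set V)) P) ↔ ∃ P, IsTrianglePartitionOn G P S := by
  constructor
  · rintro ⟨P, ⟨htri, hdisj⟩, hcov⟩
    refine ⟨P.image (map (Function.Embedding.subtype _)), ⟨⟨?_, ?_⟩, ?_⟩⟩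
    · simp only [mem_image]
      rintro _ ⟨T, hT', rfl⟩
      refine ⟨by rw [card_map, (htri T hT').1], ?_⟩
      simp only [coe_map, Function.Embedding.coe_subtype]
      rintro _ ⟨a, ha, rfl⟩ _ ⟨b, hb, rfl⟩ hab
      exact (htri T hT').2 ha hb (ne_of_apply_ne _ hab)
    · simp only [coe_image]
      rintro _ ⟨T₁, h₁, rfl⟩ _ ⟨T₂, h₂, rfl⟩ hne
      exact (disjoint_map _).mpr (hdisj h₁ h₂ (ne_of_apply_ne _ hne))
    · ext v
      simp only [mem_sup, mem_image, id, exists_exists_and_eq_and, mem_map,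
        Function.Embedding.coe_subtype]
      refine ⟨fun ⟨T, _, a, _, hav⟩ => hav ▸ a.2, fun hv => ?_⟩
      obtain ⟨T, hT, hvT⟩ := hcov ⟨v, hv⟩
      exact ⟨T, hT, _, hvT, rfl⟩
  · rintro ⟨P, hP⟩
    refine ⟨P.image (Finset.subtype (· ∈ (S : Set V))), ⟨⟨?_, ?_⟩, ?_⟩⟩
    · simp only [mem_image]
      rintro _ ⟨T, hT, rfl⟩
      have hTS : T.filter (· ∈ (S : Set V)) = T :=
        filter_true_of_mem fun v hv => mem_coe.mpr (hP.subset hT hv)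
      refine ⟨by rw [card_subtype, hTS, (hP.1.1 T hT).1], fun a ha b hb hab => ?_⟩
      rw [mem_coe, mem_subtype] at ha hb
      exact (hP.1.1 T hT).2 ha hb (Subtype.val_injective.ne hab)
    · simp only [coe_image]
      rintro _ ⟨T₁, h₁, rfl⟩ _ ⟨T₂, h₂, rfl⟩ hne
      refine disjoint_left.mpr fun a ha₁ ha₂ => ?_
      rw [mem_subtype] at ha₁ ha₂
      exact disjoint_left.mp (hP.1.2 h₁ h₂ (ne_of_apply_ne _ hne)) ha₁ ha₂
    · rintro ⟨v, hv⟩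
      rw [mem_coe, ← hP.2, mem_sup] at hv
      obtain ⟨T, hT, hvT⟩ := hv
      exact ⟨_, mem_image_of_mem _ hT, mem_subtype.mpr hvT⟩

theorem IsTrianglePacking.card_sup_id_le {P : Finset (Finset V)} (hP : IsTrianglePacking G P) :
    #(P.sup id) ≤ 3 * #P := by
  rw [sup_eq_biUnion, mul_comm]
  exact card_biUnion_le_card_mul P id 3 fun T hT => (hP.1 T hT).1.le

theorem SimpleGraph.IsClique.exists_isTrianglePartitionOn {B : Finset V}
    (hB : G.IsClique (B : Set V)) (h3 : 3 ∣ #B) : ∃ P, IsTrianglePartitionOn G P B := by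
  obtain ⟨k, hk⟩ := h3
  let F := (⊥ : Finpartition B).equitabilise (m := 3) (a := k) (b := 0) (by omega)
  have hcard : ∀ T ∈ F.parts, #T = 3 := fun T hT =>
    (Finpartition.card_eq_of_mem_parts_equitabilise hT).resolve_right fun h4 => by
      have hbig := Finpartition.card_filter_equitabilise_big (⊥ : Finpartition B) (m := 3)
        (a := k) (b := 0) (by omega)
      exact notMem_empty T (card_eq_zero.mp hbig ▸ mem_filter.mpr ⟨hT, h4⟩)
  refine ⟨F.parts, ⟨⟨fun T hT => ⟨hcard T hT, hB.subset ?_⟩, ?_⟩, F.sup_parts⟩⟩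
  · exact coe_subset.mpr (F.le hT)
  · exact fun S hS T hT hST => F.disjoint hS hT hST

theorem IsTrianglePartitionOn.exists_subset_card_le_fourteen [Fintype V] (c : V → Fin 3)
    {P : Finset (Finset V)} (hP : IsTrianglePartitionOn G P univ) :
    ∃ Q ⊆ P, #Q ≤ 14 ∧ ∀ i, 3 ∣ #{v ∈ univ \ Q.sup id | c v = i} := by
  obtain ⟨Q, hQP, hQ0, hQ2, hQsum⟩ := exists_subset_sum_eq_of_three_nsmul_eq_zero
    (ZModModule.char_nsmul_eq_zero 3) (colorProfile c) P
  refine ⟨Q, hQP, ?_, fun i => ?_⟩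
  · calc #Q ≤ 2 * #triangleProfiles :=
          card_le_mul_card_image_of_maps_to (fun T hT => colorProfile_mem_triangleProfiles c
            (hP.1.1 T (hQP hT)).1 (hQ0 T hT)) 2 fun m _ => hQ2 m
      _ = 14 := by rw [card_triangleProfiles]
  · rw [← ZMod.natCast_eq_zero_iff, ← hP.2, sup_id_sdiff_sup_id hP.1.2 hQP,
      card_filter_sup_id (hP.1.2.mono (coe_subset.mpr sdiff_subset)), Nat.cast_sum]
    have := congrFun (sum_sdiff_eq_sub hQP (f := colorProfile c)) i
    rw [hQsum, sub_self, Finset.sum_apply] at this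
    exact this

theorem IsTrianglePartitionOn.exists_isTrianglePartitionOn_univ [Fintype V] {ι : Type*}
    [Fintype ι] [DecidableEq ι] (c : V → ι) (hc : ∀ i, G.IsClique {v | c v = i})
    {Q : Finset (Finset V)} {S : Finset V} (hQ : IsTrianglePartitionOn G Q S)
    (h3 : ∀ i, 3 ∣ #{v ∈ univ \ S | c v = i}) : ∃ P, IsTrianglePartitionOn G P univ := by
  choose R hR using fun i => ((hc i).subset fun v hv => (mem_filter.mp hv).2 :
    G.IsClique (↑{v ∈ univ \ S | c v = i} : Set V)).exists_isTrianglePartitionOn (h3 i)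
  have hdisj : ((univ : Finset ι) : Set ι).PairwiseDisjoint fun i => {v ∈ univ \ S | c v = i} :=
    fun i _ j _ hij => disjoint_filter.mpr fun v _ hi hj => hij (hi ▸ hj)
  have hcover : S ∪ univ.sup (fun i => {v ∈ univ \ S | c v = i}) = univ := by
    ext v
    simp only [mem_union, mem_sup, mem_filter, mem_univ, mem_sdiff, true_and, exists_eq_right',
      iff_true]
    tauto
  refine ⟨Q ∪ univ.sup R, hcover ▸ hQ.union (sup (fun i _ => hR i) hdisj) ?_⟩
  exact Finset.disjoint_sup_right.mpr fun i _ =>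
    disjoint_sdiff.mono_right (filter_subset _ _)

end TrianglePartitionOn

/-- Let `G` be the complement of a 3-partite graph: its vertex set is
partitioned into three cliques `A 0, A 1, A 2`. Then `G` has a triangle partition iff
there is a set `S` of at most 42 vertices such that the subgraph induced on `S` has a
triangle partition and `|A i ∖ S| ≡ 0 (mod 3)` for each `i`. -/
theorem stmt14 {V : Type*} [Fintype V] [DecidableEq V] (G : SimpleGraph V)
    (A : Fin 3 → Set V)
    (hdisj : ∀ i j, i ≠ j → Disjoint (A i) (A j))
    (hunion : A 0 ∪ A 1 ∪ A 2 = Set.univ)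
    (hclique : ∀ i, G.IsClique (A i)) :
    (∃ P : Finset (Finset V), IsTrianglePartition G P) ↔
      ∃ S : Finset V, S.card ≤ 42 ∧
        (∃ P : Finset (Finset {v : V // v ∈ (S : Set V)}),
          IsTrianglePartition (G.induce (S : Set V)) P) ∧
        ∀ i : Fin 3, (A i \ (S : Set V)).ncard % 3 = 0 := by
  have hcover (v : V) : ∃ i, v ∈ A i := by
    rcases hunion.symm ▸ Set.mem_univ v with (h | h) | h
    exacts [⟨0, h⟩, ⟨1, h⟩, ⟨2, h⟩]
  obtain ⟨c, hc⟩ := exists_eq_iff_mem_of_pairwise_disjoint hdisj hcover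
  obtain rfl : A = fun i => {v | c v = i} := funext fun i => Set.ext fun v => (hc v i).symm
  have hncard (S : Finset V) (i : Fin 3) :
      ({v | c v = i} \ (S : Set V)).ncard = #{v ∈ univ \ S | c v = i} := by
    rw [← Set.ncard_coe_finset]
    congr 1
    ext v
    simp [and_comm]
  simp only [exists_isTrianglePartition_induce_iff, hncard, ← Nat.dvd_iff_mod_eq_zero]
  simp only [isTrianglePartition_iff_isTrianglePartitionOn_univ]
  constructor
  · rintro ⟨P, hP⟩
    obtain ⟨Q, hQP, hQcard, h3⟩ := hP.exists_subset_card_le_fourteen c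
    have hcard := (hP.1.mono hQP).card_sup_id_le
    exact ⟨Q.sup id, by omega, ⟨Q, hP.1.mono hQP, rfl⟩, h3⟩
  · rintro ⟨S, -, ⟨Q, hQ⟩, h3⟩
    exact hQ.exists_isTrianglePartitionOn_univ c hclique h3
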